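/- arXiv:2205.06006 — 4 statements merged into one kernel-verified Lean document; each statement's English description precedes it below -/
import Mathlib

section
/- Let (Ω, F, P) be a probability space with a filtration (F_k)_{k∈ℕ}, let ε > 0, and let μ be a Borel probability measure on ℝ^d (with the sup norm). Suppose (W_k)_{k∈ℕ} are ℝ^d-valued random vectors such that each W_k has law μ, is independent of F_k, and is F_{k+1}-measurable; and suppose (Ŵ_k)_{k∈ℕ} are ℝ^d-valued random vectors such that each Ŵ_k is F_k-measurable. Let γ = sup_{s ∈ ℝ^d} μ({x : ‖x − s‖∞ ≤ ε}). Then for every K ≥ 1, P(‖W_k − Ŵ_k‖∞ ≤ ε for all 0 ≤ k < K) ≤ γ^K. -/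
open MeasureTheory ProbabilityTheory
open scoped ENNReal

private lemma indep_mono_right {Ω : Type*} {mΩ : MeasurableSpace Ω} {P : Measure Ω}
    {m₁ m₂ m₃ : MeasurableSpace Ω} (h : Indep m₁ m₃ P) (h23 : m₂ ≤ m₃) :
    Indep m₁ m₂ P := by
  rw [Indep_iff] at h ⊢
  exact fun t1 t2 h1 h2 => h t1 t2 h1 (h23 _ h2)

/-- Key one-step bound: if `W` has law `μ`, is independent of `m`, and `Wh`, `B` are
`m`-measurable, then `P (B ∩ {‖W - Wh‖ ≤ ε}) ≤ γ * P B`. -/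
private lemma key_step {d : ℕ} {ε : ℝ}
    {Ω : Type*} (m : MeasurableSpace Ω) {mΩ : MeasurableSpace Ω} (hm : m ≤ mΩ)
    {P : Measure Ω} [IsProbabilityMeasure P]
    {μ : Measure (Fin d → ℝ)} [IsProbabilityMeasure μ]
    {W : Ω → (Fin d → ℝ)} (hWlaw : Measure.map W P = μ) (hWmeas : Measurable W)
    (hindep : Indep (MeasurableSpace.comap W inferInstance) m P)
    {Wh : Ω → (Fin d → ℝ)} (hWh : Measurable[m] Wh)
    {B : Set Ω} (hB : MeasurableSet[m] B)
    {γ : ℝ≥0∞} (hγ : γ = ⨆ s : Fin d → ℝ, μ {x | ‖x - s‖ ≤ ε}) :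
    P (B ∩ {ω | ‖W ω - Wh ω‖ ≤ ε}) ≤ γ * P B := by
  -- the auxiliary `m`-measurable function
  set U : Ω → (Fin d → ℝ) × ℝ := fun ω => (Wh ω, B.indicator (fun _ => (1 : ℝ)) ω) with hU
  have hind : Measurable[m] (B.indicator fun _ => (1 : ℝ)) := measurable_const.indicator hB
  have hUmeas_m : Measurable[m] U := Measurable.prod hWh hind
  have hUmeas : Measurable U := hUmeas_m.mono hm le_rfl
  have hWhmeas : Measurable Wh := hWh.mono hm le_rfl
  -- independence of `U` and `W`
  have hIndep : IndepFun U W P := by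
    rw [IndepFun_iff_Indep]
    exact (indep_mono_right hindep (measurable_iff_comap_le.mp hUmeas_m)).symm
  have hmap : Measure.map (fun ω => (U ω, W ω)) P
      = (Measure.map U P).prod (Measure.map W P) :=
    (indepFun_iff_map_prod_eq_prod_map_map hUmeas.aemeasurable hWmeas.aemeasurable).mp hIndep
  -- the target set as a preimage
  set S : Set (((Fin d → ℝ) × ℝ) × (Fin d → ℝ)) :=
    {p | p.1.2 = 1 ∧ ‖p.2 - p.1.1‖ ≤ ε} with hS
  have hSmeas : MeasurableSet S := by
    apply MeasurableSet.inter
    · exact (measurableSet_singleton (1 : ℝ)).preimage (measurable_snd.comp measurable_fst)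
    · have : Measurable fun p : ((Fin d → ℝ) × ℝ) × (Fin d → ℝ) => ‖p.2 - p.1.1‖ :=
        (measurable_snd.sub (measurable_fst.comp measurable_fst)).norm
      exact measurableSet_Iic.preimage this
  have hpre : B ∩ {ω | ‖W ω - Wh ω‖ ≤ ε} = (fun ω => (U ω, W ω)) ⁻¹' S := by
    ext ω
    simp only [Set.mem_inter_iff, Set.mem_setOf_eq, Set.mem_preimage, hS, hU]
    constructor
    · rintro ⟨hωB, hωε⟩
      exact ⟨by simp [Set.indicator_of_mem hωB], hωε⟩
    · rintro ⟨h1, h2⟩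
      refine ⟨?_, h2⟩
      by_contra hωB
      simp [Set.indicator_of_notMem hωB] at h1
  rw [hpre, ← Measure.map_apply (hUmeas.prodMk hWmeas) hSmeas, hmap, hWlaw,
    Measure.prod_apply hSmeas]
  -- bound the slices
  have hbound : ∀ b : (Fin d → ℝ) × ℝ,
      μ (Prod.mk b ⁻¹' S) ≤ ({b : (Fin d → ℝ) × ℝ | b.2 = 1}).indicator (fun _ => γ) b := by
    intro b
    by_cases hb : b.2 = 1
    · have : Prod.mk b ⁻¹' S = {x | ‖x - b.1‖ ≤ ε} := by
        ext x; simp [hS, hb]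
      rw [this, Set.indicator_of_mem (s := {b : (Fin d → ℝ) × ℝ | b.2 = 1}) hb, hγ]
      exact le_iSup (fun s : Fin d → ℝ => μ {x | ‖x - s‖ ≤ ε}) b.1
    · have : Prod.mk b ⁻¹' S = ∅ := by
        ext x; simp [hS, hb]
      rw [this, Set.indicator_of_notMem (s := {b : (Fin d → ℝ) × ℝ | b.2 = 1}) hb]
      simp
  calc ∫⁻ b, μ (Prod.mk b ⁻¹' S) ∂(Measure.map U P)
      ≤ ∫⁻ b, ({b : (Fin d → ℝ) × ℝ | b.2 = 1}).indicator (fun _ => γ) b ∂(Measure.map U P) :=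
        lintegral_mono hbound
    _ = γ * (Measure.map U P) {b : (Fin d → ℝ) × ℝ | b.2 = 1} := by
        have hset : MeasurableSet {b : (Fin d → ℝ) × ℝ | b.2 = 1} :=
          (measurableSet_singleton (1 : ℝ)).preimage measurable_snd
        rw [lintegral_indicator hset]
        simp [lintegral_const, mul_comm]
    _ = γ * P (U ⁻¹' {b : (Fin d → ℝ) × ℝ | b.2 = 1}) := by
        congr 1
        exact Measure.map_apply hUmeas ((measurableSet_singleton (1 : ℝ)).preimage measurable_snd)
    _ = γ * P B := by
        congr 1
        congr 1
        ext ω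
        simp only [Set.mem_preimage, Set.mem_setOf_eq, hU]
        constructor
        · intro h
          by_contra hωB
          simp [Set.indicator_of_notMem hωB] at h
        · intro h
          simp [Set.indicator_of_mem h]

/-- Geometric-decay bound for the `ε`-accurate prediction probability: if the noises
`W k` are i.i.d. with law `μ`, `W k` is independent of `F k` and `F (k+1)`-measurable,
and the predictions `Wh k` are `F k`-measurable, then the probability that all the
first `K` prediction errors are sup-norm bounded by `ε` is at most `γ^K`, where
`γ = ⨆ s, μ {x : ‖x - s‖∞ ≤ ε}`. -/
theorem stmt3 (d : ℕ) (hd : 1 ≤ d) (ε : ℝ) (hε : 0 < ε)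
    (Ω : Type*) (mΩ : MeasurableSpace Ω) (P : Measure Ω) [IsProbabilityMeasure P]
    (F : Filtration ℕ mΩ)
    (μ : Measure (Fin d → ℝ)) [IsProbabilityMeasure μ]
    (W : ℕ → Ω → (Fin d → ℝ))
    (hW_law : ∀ k, Measure.map (W k) P = μ)
    (hW_indep : ∀ k, Indep (MeasurableSpace.comap (W k) inferInstance) (F k) P)
    (hW_meas : ∀ k, Measurable[F (k + 1)] (W k))
    (Wh : ℕ → Ω → (Fin d → ℝ))
    (hWh_meas : ∀ k, Measurable[F k] (Wh k))
    (γ : ℝ≥0∞) (hγ : γ = ⨆ s : Fin d → ℝ, μ {x | ‖x - s‖ ≤ ε})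
    (K : ℕ) (hK : 1 ≤ K) :
    P {ω | ∀ k < K, ‖W k ω - Wh k ω‖ ≤ ε} ≤ γ ^ K := by
  clear hK hd hε
  -- the events are measurable w.r.t. the filtration
  have hBmeas : ∀ K, MeasurableSet[F K] {ω | ∀ k < K, ‖W k ω - Wh k ω‖ ≤ ε} := by
    intro K
    induction K with
    | zero => simp
    | succ n ih =>
      have heq : {ω | ∀ k < n + 1, ‖W k ω - Wh k ω‖ ≤ ε}
          = {ω | ∀ k < n, ‖W k ω - Wh k ω‖ ≤ ε} ∩ {ω | ‖W n ω - Wh n ω‖ ≤ ε} := by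
        ext ω
        simp only [Set.mem_inter_iff, Set.mem_setOf_eq]
        constructor
        · exact fun h => ⟨fun k hk => h k (hk.trans (Nat.lt_succ_self n)),
            h n (Nat.lt_succ_self n)⟩
        · rintro ⟨h1, h2⟩ k hk
          rcases Nat.lt_succ_iff_lt_or_eq.mp hk with hk' | rfl
          · exact h1 k hk'
          · exact h2
      rw [heq]
      refine MeasurableSet.inter (F.mono (Nat.le_succ n) _ ih) ?_
      have h1 : Measurable[F (n + 1)] fun ω => W n ω - Wh n ω :=
        (hW_meas n).sub ((hWh_meas n).mono (F.mono (Nat.le_succ n)) le_rfl)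
      have h2 : Measurable[F (n + 1)] fun ω => ‖W n ω - Wh n ω‖ :=
        measurable_norm.comp h1
      exact measurableSet_Iic.preimage h2
  induction K with
  | zero => simp
  | succ n ih =>
    have heq : {ω | ∀ k < n + 1, ‖W k ω - Wh k ω‖ ≤ ε}
        = {ω | ∀ k < n, ‖W k ω - Wh k ω‖ ≤ ε} ∩ {ω | ‖W n ω - Wh n ω‖ ≤ ε} := by
      ext ω
      simp only [Set.mem_inter_iff, Set.mem_setOf_eq]
      constructor
      · exact fun h => ⟨fun k hk => h k (hk.trans (Nat.lt_succ_self n)),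
          h n (Nat.lt_succ_self n)⟩
      · rintro ⟨h1, h2⟩ k hk
        rcases Nat.lt_succ_iff_lt_or_eq.mp hk with hk' | rfl
        · exact h1 k hk'
        · exact h2
    rw [heq]
    have hstep := key_step (F n) (F.le n) (hW_law n)
      ((hW_meas n).mono (F.le (n + 1)) le_rfl) (hW_indep n) (hWh_meas n)
      (hBmeas n) hγ
    calc P ({ω | ∀ k < n, ‖W k ω - Wh k ω‖ ≤ ε} ∩ {ω | ‖W n ω - Wh n ω‖ ≤ ε})
        ≤ γ * P {ω | ∀ k < n, ‖W k ω - Wh k ω‖ ≤ ε} := hstep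
      _ ≤ γ * γ ^ n := mul_le_mul_right ih γ
      _ = γ ^ (n + 1) := (pow_succ' γ n).symm
end

section
/- Let (Ω, F, P) be a probability space with a filtration (F_k)_{k∈ℕ}, let ε > 0, d, p ≥ 1, and let μ be a Borel probability measure on ℝ^d (with the sup norm) such that there exist y, z ∈ supp(μ) with ‖y − z‖∞ > 2ε. Let f : ℝ^d × ℝ^p → ℝ^d be measurable, (u_k)_{k∈ℕ} a deterministic sequence in ℝ^p, and x_0 an F_0-measurable ℝ^d-valued random vector. Suppose (W_k)_{k∈ℕ} are ℝ^d-valued random vectors such that each W_k has law μ, is independent of F_k, and is F_{k+1}-measurable, and define the state trajectory recursively by x_{k+1} = f(x_k, u_k) + W_k. Let (x̂_{k+1})_{k∈ℕ} be any predictions such that each x̂_{k+1} is F_k-measurable. Then lim_{K→∞} P(‖x̂_{k+1} − x_{k+1}‖∞ ≤ ε for all 0 ≤ k < K) = 0. -/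
open MeasureTheory ProbabilityTheory Filter

/-- The support of a Borel measure: the set of points all of whose open neighborhoods
have positive measure. -/
def measureSupport {E : Type*} [TopologicalSpace E] [MeasurableSpace E]
    (μ : Measure E) : Set E :=
  {x | ∀ U : Set E, IsOpen U → x ∈ U → 0 < μ U}

/-! Two points of the support lie more than `2ε` apart, so every closed `ε`-ball misses a small
ball around one of them and has `μ`-measure at most some `c < 1`. The prediction error at step `k`
is `g k - W k` with `g k` known at time `k` and `W k` independent of the past, so given that all
earlier predictions were `ε`-accurate, the next one is `ε`-accurate with probability at most `c`.
Hence `K` accurate predictions in a row have probability at most `c ^ K`. -/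

open scoped ENNReal Topology

theorem ENNReal.tendsto_atTop_zero_of_le_mul {s : ℕ → ℝ≥0∞} {c : ℝ≥0∞} (hc : c < 1)
    (h0 : s 0 ≠ ∞) (hs : ∀ n, s (n + 1) ≤ c * s n) : Tendsto s atTop (𝓝 0) := by
  have hle : ∀ n, s n ≤ c ^ n * s 0 := by
    intro n
    induction n with
    | zero => simp
    | succ n ih =>
      calc s (n + 1) ≤ c * s n := hs n
        _ ≤ c * (c ^ n * s 0) := by gcongr
        _ = c ^ (n + 1) * s 0 := by ring
  have hlim : Tendsto (fun n => c ^ n * s 0) atTop (𝓝 0) := by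
    simpa using ENNReal.Tendsto.mul_const (ENNReal.tendsto_pow_atTop_nhds_zero_of_lt_one hc)
      (Or.inr h0)
  exact tendsto_of_tendsto_of_tendsto_of_le_of_le tendsto_const_nhds hlim (fun _ => zero_le) hle

theorem exists_lt_one_forall_measure_closedBall_le {E : Type*} [PseudoMetricSpace E]
    [MeasurableSpace E] [OpensMeasurableSpace E] (μ : Measure E) [IsProbabilityMeasure μ]
    {y z : E} (hy : y ∈ measureSupport μ) (hz : z ∈ measureSupport μ) {ε : ℝ}
    (hyz : 2 * ε < dist y z) : ∃ c < 1, ∀ a, μ (Metric.closedBall a ε) ≤ c := by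
  set r := (dist y z - 2 * ε) / 2
  have hr : 0 < r := by simp only [r]; linarith
  set q := min (μ (Metric.ball y r)) (μ (Metric.ball z r))
  have hq : 0 < q := lt_min (hy _ Metric.isOpen_ball (Metric.mem_ball_self hr))
    (hz _ Metric.isOpen_ball (Metric.mem_ball_self hr))
  refine ⟨1 - q, ENNReal.sub_lt_self ENNReal.one_ne_top one_ne_zero hq.ne', fun a => ?_⟩
  have hfar : ε + r ≤ dist a y ∨ ε + r ≤ dist a z := by
    by_contra! h
    have hdist : dist y z = 2 * (ε + r) := by simp only [r]; ring
    linarith [dist_triangle_left y z a]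
  have hmiss : ∀ w, ε + r ≤ dist a w → q ≤ μ (Metric.ball w r) →
      μ (Metric.closedBall a ε) ≤ 1 - q := fun w hw hqw =>
    calc μ (Metric.closedBall a ε) ≤ μ (Metric.ball w r)ᶜ :=
          measure_mono (Metric.closedBall_disjoint_ball hw).subset_compl_right
      _ = 1 - μ (Metric.ball w r) := prob_compl_eq_one_sub Metric.isOpen_ball.measurableSet
      _ ≤ 1 - q := tsub_le_tsub_left hqw 1
  rcases hfar with hfar | hfar
  · exact hmiss y hfar (min_le_left _ _)
  · exact hmiss z hfar (min_le_right _ _)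

section Tracking

variable {Ω α β : Type*} {m mΩ : MeasurableSpace Ω} [MeasurableSpace α] [MeasurableSpace β]
  {P : Measure Ω} [IsProbabilityMeasure P]

theorem measure_inter_preimage_le_of_indep (hm : m ≤ mΩ)
    {G : Ω → α} {W : Ω → β} (hG : Measurable[m] G) (hW : Measurable W)
    (hindep : Indep (MeasurableSpace.comap W inferInstance) m P)
    {A : Set Ω} (hA : MeasurableSet[m] A) {S : Set (α × β)} (hS : MeasurableSet S)
    {c : ℝ≥0∞} (hc : ∀ a, P.map W (Prod.mk a ⁻¹' S) ≤ c) :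
    P (A ∩ {ω | (G ω, W ω) ∈ S}) ≤ c * P A := by
  -- pairing `G` with `ω ∈ A` makes the event depend on an `m`-measurable variable and `W` only,
  -- whose joint law is a product
  set Y : Ω → α × Prop := fun ω => (G ω, ω ∈ A)
  have hYm : Measurable[m] Y := hG.prodMk ((@measurableSet_setOfPred Ω m (· ∈ A)).mp hA)
  have hY : Measurable Y := hYm.mono hm le_rfl
  have hYW : IndepFun Y W P := indep_of_indep_of_le_left hindep.symm hYm.comap_le
  set T : Set ((α × Prop) × β) := {t | t.1.2 ∧ (t.1.1, t.2) ∈ S}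
  have hT : MeasurableSet T :=
    (measurableSet_setOfPred.mpr (measurable_snd.comp measurable_fst)).inter
      (((measurable_fst.comp measurable_fst).prodMk measurable_snd) hS)
  have hU : MeasurableSet {t : α × Prop | t.2} := measurableSet_setOfPred.mpr measurable_snd
  have hslice : ∀ t : α × Prop,
      P.map W (Prod.mk t ⁻¹' T) ≤ {t : α × Prop | t.2}.indicator (fun _ => c) t := by
    rintro ⟨a, hat⟩
    by_cases h : hat
    · rw [Set.indicator_of_mem (show (a, hat) ∈ {t : α × Prop | t.2} from h)]
      convert hc a using 2
      ext b
      simp [T, h]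
    · simp [T, h]
  calc P (A ∩ {ω | (G ω, W ω) ∈ S}) = P.map (fun ω => (Y ω, W ω)) T :=
        (Measure.map_apply (hY.prodMk hW) hT).symm
    _ = ∫⁻ t, P.map W (Prod.mk t ⁻¹' T) ∂P.map Y := by
        rw [hYW.map_prod_eq_prod_map_map hY.aemeasurable hW.aemeasurable, Measure.prod_apply hT]
    _ ≤ ∫⁻ t, {t : α × Prop | t.2}.indicator (fun _ => c) t ∂P.map Y := lintegral_mono hslice
    _ = c * P A := by rw [lintegral_indicator_const hU, Measure.map_apply hY hU]; rfl

theorem tendsto_measure_forall_mem_of_indep (F : Filtration ℕ mΩ) {G : ℕ → Ω → α}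
    {W : ℕ → Ω → β} (hG : ∀ k, Measurable[F k] (G k)) (hW : ∀ k, Measurable[F (k + 1)] (W k))
    (hindep : ∀ k, Indep (MeasurableSpace.comap (W k) inferInstance) (F k) P)
    {S : Set (α × β)} (hS : MeasurableSet S) {c : ℝ≥0∞} (hc : c < 1)
    (hslice : ∀ k a, P.map (W k) (Prod.mk a ⁻¹' S) ≤ c) :
    Tendsto (fun K => P {ω | ∀ k < K, (G k ω, W k ω) ∈ S}) atTop (𝓝 0) := by
  have hstep : ∀ k, MeasurableSet[F (k + 1)] {ω | (G k ω, W k ω) ∈ S} := fun k =>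
    (((hG k).mono (F.mono k.le_succ) le_rfl).prodMk (hW k)) hS
  have hmeas : ∀ K, MeasurableSet[F K] {ω | ∀ k < K, (G k ω, W k ω) ∈ S} := fun K => by
    simp only [Set.ofPred_forall]
    exact .iInter fun k => .iInter fun hk => F.mono hk _ (hstep k)
  refine ENNReal.tendsto_atTop_zero_of_le_mul hc (measure_ne_top _ _) fun K => ?_
  simp only [Nat.forall_lt_succ_right, Set.ofPred_and]
  exact measure_inter_preimage_le_of_indep (F.le K) (hG K) ((hW K).mono (F.le (K + 1)) le_rfl)
    (hindep K) (hmeas K) hS (hslice K)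

end Tracking

theorem stmt4_general (d p : ℕ) (ε : ℝ)
    (Ω : Type*) (mΩ : MeasurableSpace Ω) (P : Measure Ω) [IsProbabilityMeasure P]
    (F : Filtration ℕ mΩ)
    (μ : Measure (Fin d → ℝ)) [IsProbabilityMeasure μ]
    (y z : Fin d → ℝ) (hy : y ∈ measureSupport μ) (hz : z ∈ measureSupport μ)
    (hyz : 2 * ε < ‖y - z‖)
    (f : (Fin d → ℝ) → (Fin p → ℝ) → (Fin d → ℝ))
    (hf_meas : Measurable (Function.uncurry f))
    (u : ℕ → (Fin p → ℝ))
    (W : ℕ → Ω → (Fin d → ℝ))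
    (hW_law : ∀ k, Measure.map (W k) P = μ)
    (hW_indep : ∀ k, Indep (MeasurableSpace.comap (W k) inferInstance) (F k) P)
    (hW_meas : ∀ k, Measurable[F (k + 1)] (W k))
    (x : ℕ → Ω → (Fin d → ℝ))
    (hx0_meas : Measurable[F 0] (x 0))
    (hx_rec : ∀ k ω, x (k + 1) ω = f (x k ω) (u k) + W k ω)
    (xh : ℕ → Ω → (Fin d → ℝ))
    (hxh_meas : ∀ k, Measurable[F k] (xh (k + 1))) :
    Tendsto (fun K : ℕ => P {ω | ∀ k < K, ‖xh (k + 1) ω - x (k + 1) ω‖ ≤ ε})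
      atTop (nhds 0) := by
  obtain ⟨c, hc, hball⟩ :=
    exists_lt_one_forall_measure_closedBall_le μ hy hz (by rwa [dist_eq_norm])
  have hx_meas : ∀ k, Measurable[F k] (x k) := by
    intro k
    induction k with
    | zero => exact hx0_meas
    | succ k ih =>
      rw [funext (hx_rec k)]
      exact (hf_meas.comp ((ih.mono (F.mono k.le_succ) le_rfl).prodMk measurable_const)).add
        (hW_meas k)
  -- `xh (k + 1) - x (k + 1) = g k - W k` with `g k` known at time `k`
  set g : ℕ → Ω → (Fin d → ℝ) := fun k ω => xh (k + 1) ω - f (x k ω) (u k)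
  have hg : ∀ k, Measurable[F k] (g k) := fun k =>
    (hxh_meas k).sub (hf_meas.comp ((hx_meas k).prodMk measurable_const))
  have hevent : ∀ K, {ω | ∀ k < K, ‖xh (k + 1) ω - x (k + 1) ω‖ ≤ ε} =
      {ω | ∀ k < K, (g k ω, W k ω) ∈ {q : (Fin d → ℝ) × (Fin d → ℝ) | dist q.2 q.1 ≤ ε}} := by
    intro K
    ext ω
    simp only [Set.mem_ofPred_eq, dist_eq_norm, norm_sub_rev (W _ ω), g, sub_sub, hx_rec]
  simp_rw [hevent]
  exact tendsto_measure_forall_mem_of_indep F hg hW_meas hW_indep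
    (measurableSet_le (measurable_snd.dist measurable_fst) measurable_const) hc
    fun k a => (hW_law k).symm ▸ hball a

/-- Lemma 1 of the paper: for the stochastic dynamical system
`x (k+1) = f (x k) (u k) + W k` driven by i.i.d. noise with law `μ` whose support has
sup-norm diameter greater than `2ε`, and any adapted predictions `xh (k+1)`
(each `F k`-measurable), the `ε`-accurate prediction probability over a horizon `K`
tends to `0` as `K → ∞`. -/
theorem stmt4 (d p : ℕ) (hd : 1 ≤ d) (hp : 1 ≤ p) (ε : ℝ) (hε : 0 < ε)
    (Ω : Type*) (mΩ : MeasurableSpace Ω) (P : Measure Ω) [IsProbabilityMeasure P]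
    (F : Filtration ℕ mΩ)
    (μ : Measure (Fin d → ℝ)) [IsProbabilityMeasure μ]
    (y z : Fin d → ℝ) (hy : y ∈ measureSupport μ) (hz : z ∈ measureSupport μ)
    (hyz : 2 * ε < ‖y - z‖)
    (f : (Fin d → ℝ) → (Fin p → ℝ) → (Fin d → ℝ))
    (hf_meas : Measurable (Function.uncurry f))
    (u : ℕ → (Fin p → ℝ))
    (W : ℕ → Ω → (Fin d → ℝ))
    (hW_law : ∀ k, Measure.map (W k) P = μ)
    (hW_indep : ∀ k, Indep (MeasurableSpace.comap (W k) inferInstance) (F k) P)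
    (hW_meas : ∀ k, Measurable[F (k + 1)] (W k))
    (x : ℕ → Ω → (Fin d → ℝ))
    (hx0_meas : Measurable[F 0] (x 0))
    (hx_rec : ∀ k ω, x (k + 1) ω = f (x k ω) (u k) + W k ω)
    (xh : ℕ → Ω → (Fin d → ℝ))
    (hxh_meas : ∀ k, Measurable[F k] (xh (k + 1))) :
    Tendsto (fun K : ℕ => P {ω | ∀ k < K, ‖xh (k + 1) ω - x (k + 1) ω‖ ≤ ε})
      atTop (nhds 0) :=
  stmt4_general d p ε Ω mΩ P F μ y z hy hz hyz f hf_meas u W hW_law hW_indep hW_meas x hx0_meas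
    hx_rec xh hxh_meas
end

section
/- Let m ≥ 2 and K ≥ 1, let (Ω, F, P) be a probability space, and let X_0, …, X_{K−1} : Ω → Fin m be independent random variables, each distributed according to a probability vector p : Fin m → ℝ with 0 < p_i < 1 for all i. Define the (random) empirical type T : Fin m → ℝ by T_i = (#{k : X_k = i})/K, and let L = max_{i} (−ln p_i)/p_i. Then for every t > 0, P( | −H_s(T) − KL(T‖p) + H_s(p) | ≥ t ) ≤ 2 exp(−2 K t² / L²), where H_s(·) denotes Shannon entropy and KL(T‖p) = Σ_i T_i ln(T_i/p_i), with the conventions 0 · ln 0 = 0 and 0 · ln(0/p_i) = 0. -/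
open MeasureTheory ProbabilityTheory

/-!
By the type identity, `-H_s(T) - KL(T‖p) = ∑ᵢ Tᵢ log pᵢ = (1/K) ∑ₖ log p(X_k)`, while
`-H_s(p) = 𝔼[log p(X_k)]`. The deviation is thus the empirical mean minus the mean of the `K`
independent variables `log p(X_k)`, which take values in `[-L, 0]` because
`-log pᵢ ≤ -log pᵢ / pᵢ ≤ L`; Hoeffding's inequality gives the bound.
-/

open scoped NNReal

namespace ProbabilityTheory

variable {Ω ι : Type*} [MeasurableSpace Ω] {μ : Measure Ω}

lemma measureReal_abs_sum_ge_le_of_iIndepFun [IsFiniteMeasure μ] {Y : ι → Ω → ℝ}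
    (h_indep : iIndepFun Y μ) {c : ι → ℝ≥0} {s : Finset ι}
    (h_subG : ∀ i ∈ s, HasSubgaussianMGF (Y i) (c i) μ) {ε : ℝ} (hε : 0 ≤ ε) :
    μ.real {ω | ε ≤ |∑ i ∈ s, Y i ω|} ≤ 2 * Real.exp (-ε ^ 2 / (2 * ∑ i ∈ s, c i)) := by
  have h_indep_neg : iIndepFun (fun i => -Y i) μ :=
    h_indep.comp (fun _ (x : ℝ) => -x) fun _ => measurable_neg
  have h_upper := HasSubgaussianMGF.measure_sum_ge_le_of_iIndepFun h_indep h_subG hε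
  have h_lower := HasSubgaussianMGF.measure_sum_ge_le_of_iIndepFun h_indep_neg
    (fun i hi => (h_subG i hi).neg) hε
  have h_split : {ω | ε ≤ |∑ i ∈ s, Y i ω|}
      ⊆ {ω | ε ≤ ∑ i ∈ s, Y i ω} ∪ {ω | ε ≤ ∑ i ∈ s, (-Y i) ω} := by
    intro ω hω
    simpa only [Set.mem_union, Set.mem_ofPred_eq, Pi.neg_apply, Finset.sum_neg_distrib] using
      le_abs.mp hω
  calc μ.real {ω | ε ≤ |∑ i ∈ s, Y i ω|}
      ≤ μ.real {ω | ε ≤ ∑ i ∈ s, Y i ω} + μ.real {ω | ε ≤ ∑ i ∈ s, (-Y i) ω} :=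
        (measureReal_mono h_split).trans (measureReal_union_le _ _)
    _ ≤ 2 * Real.exp (-ε ^ 2 / (2 * ∑ i ∈ s, c i)) := by linarith

lemma measureReal_abs_sum_sub_integral_ge_le [IsProbabilityMeasure μ] {Y : ι → Ω → ℝ}
    (h_indep : iIndepFun Y μ) (h_meas : ∀ i, AEMeasurable (Y i) μ) {a b : ℝ}
    (h_bdd : ∀ i, ∀ᵐ ω ∂μ, Y i ω ∈ Set.Icc a b) (s : Finset ι) {ε : ℝ} (hε : 0 ≤ ε) :
    μ.real {ω | ε ≤ |∑ i ∈ s, (Y i ω - μ[Y i])|}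
      ≤ 2 * Real.exp (-2 * ε ^ 2 / (s.card * (b - a) ^ 2)) := by
  have h_centered : iIndepFun (fun i ω => Y i ω - μ[Y i]) μ :=
    h_indep.comp (fun i (x : ℝ) => x - ∫ ω, Y i ω ∂μ) fun _ => measurable_id.sub_const _
  refine (measureReal_abs_sum_ge_le_of_iIndepFun h_centered
    (fun i _ => hasSubgaussianMGF_of_mem_Icc (h_meas i) (h_bdd i)) hε).trans_eq ?_
  congr 2
  rw [Finset.sum_const, nsmul_eq_mul]
  push_cast
  rw [Real.norm_eq_abs, div_pow, sq_abs,
    show 2 * (s.card * ((b - a) ^ 2 / 2 ^ 2)) = s.card * (b - a) ^ 2 / 2 by ring,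
    div_div_eq_mul_div]
  ring

end ProbabilityTheory

lemma integral_comp_eq_sum {Ω α : Type*} [MeasurableSpace Ω] {μ : Measure Ω}
    [IsFiniteMeasure μ] [Fintype α] [MeasurableSpace α] [MeasurableSingletonClass α]
    {Z : Ω → α} (hZ : Measurable Z) {p : α → ℝ} (hp : ∀ i, 0 ≤ p i)
    (hlaw : ∀ i, μ {ω | Z ω = i} = ENNReal.ofReal (p i)) (f : α → ℝ) :
    ∫ ω, f (Z ω) ∂μ = ∑ i, p i * f i := by
  rw [← integral_map hZ.aemeasurable (by fun_prop), integral_fintype .of_finite]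
  refine Finset.sum_congr rfl fun i _ => ?_
  rw [map_measureReal_apply hZ (measurableSet_singleton i), measureReal_def]
  simp [Set.preimage, hlaw, hp i]

lemma Fintype.sum_card_filter_mul {κ ι R : Type*} [Fintype κ] [Fintype ι] [DecidableEq ι]
    [Semiring R] (x : κ → ι) (f : ι → R) :
    ∑ i, ((Finset.univ.filter fun k => x k = i).card : R) * f i = ∑ k, f (x k) := by
  rw [← Finset.sum_fiberwise Finset.univ x (fun k => f (x k))]
  refine Finset.sum_congr rfl fun i _ => ?_
  rw [Finset.sum_congr rfl fun k hk => congrArg f (Finset.mem_filter.mp hk).2,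
    Finset.sum_const, nsmul_eq_mul]

namespace Real

lemma sum_mul_log_sub_sum_mul_log_div {ι : Type*} (s : Finset ι) (T p : ι → ℝ)
    (hp : ∀ i ∈ s, p i ≠ 0) :
    ∑ i ∈ s, T i * log (T i) - ∑ i ∈ s, T i * log (T i / p i) = ∑ i ∈ s, T i * log (p i) := by
  rw [← Finset.sum_sub_distrib]
  refine Finset.sum_congr rfl fun i hi => ?_
  rcases eq_or_ne (T i) 0 with hT | hT
  · simp [hT]
  · rw [log_div hT (hp i hi)]
    ring

lemma sum_mul_log_sub_sum_mul_log_div_of_empirical {K : ℕ} {ι : Type*} [Fintype ι]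
    [DecidableEq ι] (x : Fin K → ι) {p : ι → ℝ} (hp : ∀ i, p i ≠ 0) {T : ι → ℝ}
    (hT : ∀ i, T i = ((Finset.univ.filter fun k => x k = i).card : ℝ) / K) :
    ∑ i, T i * log (T i) - ∑ i, T i * log (T i / p i) = (∑ k, log (p (x k))) / K := by
  rw [sum_mul_log_sub_sum_mul_log_div _ _ _ fun i _ => hp i, ← Fintype.sum_card_filter_mul x fun i => log (p i),
    Finset.sum_div]
  simp only [hT, div_mul_eq_mul_div]

lemma log_mem_Icc_neg_iSup_neg_log_div {ι : Type*} [Fintype ι] {p : ι → ℝ}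
    (hp_pos : ∀ i, 0 < p i) (hp_sum : ∑ i, p i = 1) (i : ι) :
    log (p i) ∈ Set.Icc (-⨆ j, -log (p j) / p j) 0 := by
  have hp_le_one : p i ≤ 1 :=
    hp_sum ▸ Finset.single_le_sum (fun j _ => (hp_pos j).le) (Finset.mem_univ i)
  have h_neg_log : 0 ≤ -log (p i) := neg_nonneg.mpr (log_nonpos (hp_pos i).le hp_le_one)
  have h_le_iSup : -log (p i) / p i ≤ ⨆ j, -log (p j) / p j :=
    le_ciSup (f := fun j => -log (p j) / p j) (Set.finite_range _).bddAbove i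
  exact ⟨by linarith [le_div_self h_neg_log (hp_pos i) hp_le_one], by linarith⟩

end Real

theorem stmt9_general (m K : ℕ) (hK : 1 ≤ K)
    (Ω : Type*) [MeasurableSpace Ω] (P : Measure Ω) [IsProbabilityMeasure P]
    (X : Fin K → Ω → Fin m) (hX_meas : ∀ k, Measurable (X k))
    (hX_indep : iIndepFun X P)
    (p : Fin m → ℝ) (hp_pos : ∀ i, 0 < p i)
    (hp_sum : ∑ i, p i = 1)
    (hX_law : ∀ k i, P {ω | X k ω = i} = ENNReal.ofReal (p i))
    (T : Ω → Fin m → ℝ)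
    (hT : ∀ ω i, T ω i = ((Finset.univ.filter fun k => X k ω = i).card : ℝ) / K)
    (L : ℝ) (hL : L = ⨆ i, (-Real.log (p i)) / p i) :
    ∀ t : ℝ, 0 < t →
      P {ω | t ≤ |(-(-∑ i, T ω i * Real.log (T ω i)))
            - (∑ i, T ω i * Real.log (T ω i / p i))
            + (-∑ i, p i * Real.log (p i))|}
        ≤ ENNReal.ofReal (2 * Real.exp (-(2 * K * t ^ 2) / L ^ 2)) := by
  intro t ht
  have hK_pos : (0 : ℝ) < K := by exact_mod_cast hK
  set Y : Fin K → Ω → ℝ := fun k ω => Real.log (p (X k ω))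
  have h_mean : ∀ k, P[Y k] = ∑ i, p i * Real.log (p i) := fun k =>
    integral_comp_eq_sum (hX_meas k) (fun i => (hp_pos i).le) (hX_law k) (fun i => Real.log (p i))
  have h_event : {ω | t ≤ |(-(-∑ i, T ω i * Real.log (T ω i)))
      - (∑ i, T ω i * Real.log (T ω i / p i)) + (-∑ i, p i * Real.log (p i))|}
      = {ω | K * t ≤ |∑ k, (Y k ω - P[Y k])|} := by
    ext ω
    have h_dev : ∑ k, (Y k ω - P[Y k]) = K * ((∑ k, Y k ω) / K - ∑ i, p i * Real.log (p i)) := by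
      simp only [h_mean, Finset.sum_sub_distrib, Finset.sum_const, Finset.card_univ,
        Fintype.card_fin, nsmul_eq_mul]
      field_simp
    rw [Set.mem_ofPred_eq, Set.mem_ofPred_eq, neg_neg,
      Real.sum_mul_log_sub_sum_mul_log_div_of_empirical _ (fun i => (hp_pos i).ne') (hT ω),
      h_dev, abs_mul, Nat.abs_cast, mul_le_mul_iff_right₀ hK_pos, ← sub_eq_add_neg]
  rw [h_event, ← ofReal_measureReal]
  refine ENNReal.ofReal_le_ofReal ?_
  calc P.real {ω | K * t ≤ |∑ k, (Y k ω - P[Y k])|}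
      ≤ 2 * Real.exp (-2 * (K * t) ^ 2 / ((Finset.univ : Finset (Fin K)).card * (0 - -L) ^ 2)) :=
        measureReal_abs_sum_sub_integral_ge_le
          (hX_indep.comp (fun _ i => Real.log (p i)) fun _ => .of_discrete)
          (fun k => (Measurable.of_discrete.comp (hX_meas k)).aemeasurable)
          (fun k => ae_of_all _ fun ω =>
            hL ▸ Real.log_mem_Icc_neg_iSup_neg_log_div hp_pos hp_sum (X k ω))
          _ (by positivity)
    _ = 2 * Real.exp (-(2 * K * t ^ 2) / L ^ 2) := by
      rw [Finset.card_univ, Fintype.card_fin]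
      field_simp
      ring_nf

/-- Theorem 8 of the paper: for i.i.d. labels `X k` on `Fin m` with distribution `p`
(`0 < p i < 1`), the normalized log-probability `-H_s(T) - KL(T ‖ p)` of the realized
sequence (expressed through its random empirical type `T`) concentrates around
`-H_s(p)` with a Hoeffding-type bound `2 exp (-2 K t² / L²)`, where
`L = max_i (-ln p i) / p i`. -/
theorem stmt9 (m K : ℕ) (hm : 2 ≤ m) (hK : 1 ≤ K)
    (Ω : Type*) [MeasurableSpace Ω] (P : Measure Ω) [IsProbabilityMeasure P]
    (X : Fin K → Ω → Fin m) (hX_meas : ∀ k, Measurable (X k))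
    (hX_indep : iIndepFun X P)
    (p : Fin m → ℝ) (hp_pos : ∀ i, 0 < p i) (hp_lt : ∀ i, p i < 1)
    (hp_sum : ∑ i, p i = 1)
    (hX_law : ∀ k i, P {ω | X k ω = i} = ENNReal.ofReal (p i))
    (T : Ω → Fin m → ℝ)
    (hT : ∀ ω i, T ω i = ((Finset.univ.filter fun k => X k ω = i).card : ℝ) / K)
    (L : ℝ) (hL : L = ⨆ i, (-Real.log (p i)) / p i) :
    ∀ t : ℝ, 0 < t →
      P {ω | t ≤ |(-(-∑ i, T ω i * Real.log (T ω i)))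
            - (∑ i, T ω i * Real.log (T ω i / p i))
            + (-∑ i, p i * Real.log (p i))|}
        ≤ ENNReal.ofReal (2 * Real.exp (-(2 * K * t ^ 2) / L ^ 2)) :=
  stmt9_general m K hK Ω P X hX_meas hX_indep p hp_pos hp_sum hX_law T hT L hL
end

section
/- Let d ≥ 1, n ≥ 1 be integers and s > 0. Let Q = [0, ns)^d and partition Q into the n^d half-open cubes A_v = ∏_{j=1}^d [v_j s, (v_j+1)s) for v ∈ {0,…,n−1}^d, each of side length s. Let q : ℝ^d → ℝ be continuous and strictly positive on the closed cube Q̄ = [0, ns]^d, with ∫_Q q dλ = 1 (λ = Lebesgue measure). Set p_v = ∫_{A_v} q dλ and δ = sup{ |ln q(x) − ln q(y)| : x, y ∈ Q̄, ‖x − y‖∞ ≤ s }. Then | (−Σ_v p_v ln p_v) + d ln s + ∫_Q q ln q dλ | ≤ δ; that is, the Shannon entropy of the discrete approximation (p_v) differs from H_d(q) − d ln s by at most the oscillation δ of ln q at scale s, where H_d(q) = −∫_Q q ln q dλ. -/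
/-!
By the integral mean value theorem on each (connected) cell, `p_v = s^d q(ξ_v)` for some `ξ_v`
in the cell, so `ln p_v - d ln s = ln q(ξ_v)`. The quantity to bound is therefore
`Σ_v ∫_{A_v} q (ln q - ln q(ξ_v))`; a cell has sup-norm diameter at most `s`, so the integrand
is at most `δ q` in absolute value, and summing gives `δ Σ_v p_v = δ`.
-/

open MeasureTheory Set Real Function

lemma Ico_zero_natCast_mul_eq_iUnion (n : ℕ) (s : ℝ) :
    Ico (0 : ℝ) (n * s) = ⋃ k : Fin n, Ico ((k : ℝ) * s) ((k + 1) * s) := by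
  refine subset_antisymm ?_ (iUnion_subset fun k x ⟨hkx, hxk⟩ ↦ ?_)
  · intro x hx
    obtain ⟨k, hkx, hk, hxk⟩ : ∃ k : ℕ, k * s ≤ x ∧ k < n ∧ x < (k + 1) * s := by
      simpa using Ico_subset_biUnion_Ico n (fun k : ℕ ↦ (k : ℝ) * s) (by simpa using hx)
    exact mem_iUnion.2 ⟨⟨k, hk⟩, hkx, hxk⟩
  · have hs : 0 < s := by nlinarith
    have hkn : (k : ℝ) + 1 ≤ n := by exact_mod_cast k.isLt
    exact ⟨(by positivity : (0 : ℝ) ≤ k * s).trans hkx, hxk.trans_le (by gcongr)⟩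

lemma pairwise_disjoint_Ico_natCast_mul {s : ℝ} (hs : 0 ≤ s) :
    Pairwise (Disjoint on fun k : ℕ ↦ Ico ((k : ℝ) * s) ((k + 1) * s)) := by
  simpa using (show Monotone fun k : ℕ ↦ (k : ℝ) * s from
    fun _ _ h ↦ mul_le_mul_of_nonneg_right (Nat.cast_le.2 h) hs).pairwise_disjoint_on_Ico_succ

section GridCube

variable {ι : Type*} {n : ℕ}

def gridCube (s : ℝ) (v : ι → Fin n) : Set (ι → ℝ) :=
  {x | ∀ j, x j ∈ Ico ((v j : ℝ) * s) ((v j + 1) * s)}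

lemma gridCube_eq_univ_pi (s : ℝ) (v : ι → Fin n) :
    gridCube s v = univ.pi fun j ↦ Ico ((v j : ℝ) * s) ((v j + 1) * s) := by
  ext; simp [gridCube]

lemma measurableSet_gridCube [Countable ι] (s : ℝ) (v : ι → Fin n) :
    MeasurableSet (gridCube s v) := by
  rw [gridCube_eq_univ_pi]; exact .univ_pi fun _ ↦ measurableSet_Ico

lemma volume_gridCube [Fintype ι] (s : ℝ) (v : ι → Fin n) :
    volume (gridCube s v) = ENNReal.ofReal s ^ Fintype.card ι := by
  simp [gridCube_eq_univ_pi, volume_pi_pi, Real.volume_Ico, add_mul]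

lemma isConnected_gridCube {s : ℝ} (hs : 0 < s) (v : ι → Fin n) :
    IsConnected (gridCube s v) := by
  rw [gridCube_eq_univ_pi]
  refine ⟨univ_pi_nonempty_iff.2 fun j ↦ nonempty_Ico.2 (by linarith), ?_⟩
  exact (convex_pi fun _ _ ↦ convex_Ico _ _).isPreconnected

lemma gridCube_subset_setOf_forall_mem_Icc {s : ℝ} (hs : 0 ≤ s) (v : ι → Fin n) :
    gridCube s v ⊆ {x | ∀ j, x j ∈ Icc (0 : ℝ) (n * s)} := by
  intro x hx j
  have hvn : ((v j : ℕ) : ℝ) + 1 ≤ n := by exact_mod_cast (v j).isLt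
  exact ⟨(by positivity : (0 : ℝ) ≤ _).trans (hx j).1,
    (hx j).2.le.trans (by gcongr)⟩

lemma norm_sub_le_of_mem_gridCube [Fintype ι] {s : ℝ} (hs : 0 ≤ s) {v : ι → Fin n}
    {x y : ι → ℝ} (hx : x ∈ gridCube s v) (hy : y ∈ gridCube s v) : ‖x - y‖ ≤ s := by
  refine (pi_norm_le_iff_of_nonneg hs).2 fun j ↦ ?_
  obtain ⟨⟨hx₁, hx₂⟩, ⟨hy₁, hy₂⟩⟩ := And.intro (hx j) (hy j)
  rw [Pi.sub_apply, Real.norm_eq_abs, abs_sub_le_iff]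
  constructor <;> linarith

lemma iUnion_gridCube [Fintype ι] (s : ℝ) :
    ⋃ v : ι → Fin n, gridCube s v = {x | ∀ j, x j ∈ Ico (0 : ℝ) (n * s)} := by
  have h := iUnion_univ_pi fun (_ : ι) (k : Fin n) ↦ Ico ((k : ℝ) * s) ((k + 1) * s)
  rw [← Ico_zero_natCast_mul_eq_iUnion] at h
  simp only [gridCube_eq_univ_pi, h]
  ext; simp

lemma pairwise_disjoint_gridCube {s : ℝ} (hs : 0 ≤ s) :
    Pairwise (Disjoint on (gridCube s : (ι → Fin n) → Set (ι → ℝ))) := by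
  intro v w hvw
  obtain ⟨j, hj⟩ := Function.ne_iff.1 hvw
  simp only [Function.onFun, gridCube_eq_univ_pi, disjoint_univ_pi]
  exact ⟨j, pairwise_disjoint_Ico_natCast_mul hs (Fin.val_injective.ne hj)⟩

end GridCube

lemma abs_sub_le_sSup_of_norm_sub_le {E : Type*} [SeminormedAddCommGroup E] {K : Set E}
    {g : E → ℝ} (hK : IsCompact K) (hg : ContinuousOn g K) {s : ℝ} {x y : E} (hx : x ∈ K)
    (hy : y ∈ K) (hxy : ‖x - y‖ ≤ s) :
    |g x - g y| ≤ sSup {t | ∃ x ∈ K, ∃ y ∈ K, ‖x - y‖ ≤ s ∧ t = |g x - g y|} := by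
  have hcont : ContinuousOn (fun z : E × E ↦ |g z.1 - g z.2|) (K ×ˢ K) :=
    ((hg.comp continuousOn_fst fun _ hz ↦ hz.1).sub
      (hg.comp continuousOn_snd fun _ hz ↦ hz.2)).abs
  refine le_csSup (((hK.prod hK).image_of_continuousOn hcont).bddAbove.mono ?_)
    ⟨x, hx, y, hy, hxy, rfl⟩
  rintro _ ⟨x, hx, y, hy, -, rfl⟩
  exact ⟨(x, y), ⟨hx, hy⟩, rfl⟩

section Quantization

variable {α : Type*} [MeasurableSpace α] {μ : Measure α} {A : Set α} {q g : α → ℝ} {c δ : ℝ}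

lemma abs_setIntegral_mul_sub_le (hA : MeasurableSet A) (hq : IntegrableOn q A μ)
    (hqg : IntegrableOn (fun x ↦ q x * g x) A μ) (hq₀ : ∀ x ∈ A, 0 ≤ q x)
    (hg : ∀ x ∈ A, |g x - c| ≤ δ) :
    |∫ x in A, q x * g x ∂μ - (∫ x in A, q x ∂μ) * c| ≤ δ * ∫ x in A, q x ∂μ := by
  rw [← integral_mul_const, ← integral_sub hqg (hq.mul_const c), ← integral_const_mul]
  refine (abs_integral_le_integral_abs).trans <|
    setIntegral_mono_on (hqg.sub (hq.mul_const c)).abs (hq.const_mul δ) hA fun x hx ↦ ?_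
  rw [← mul_sub, abs_mul, abs_of_nonneg (hq₀ x hx), mul_comm δ]
  exact mul_le_mul_of_nonneg_left (hg x hx) (hq₀ x hx)

variable [TopologicalSpace α] {m : ℝ}

lemma abs_setIntegral_mul_log_sub_le (hA : MeasurableSet A) (hconn : IsConnected A)
    (hm : 0 < m) (hvol : μ A = ENNReal.ofReal m) (hcont : ContinuousOn q A)
    (hpos : ∀ x ∈ A, 0 < q x) (hq : IntegrableOn q A μ)
    (hqlog : IntegrableOn (fun x ↦ q x * log (q x)) A μ)
    (hosc : ∀ x ∈ A, ∀ y ∈ A, |log (q x) - log (q y)| ≤ δ) :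
    |∫ x in A, q x * log (q x) ∂μ
        - (∫ x in A, q x ∂μ) * (log (∫ x in A, q x ∂μ) - log m)| ≤ δ * ∫ x in A, q x ∂μ := by
  obtain ⟨ξ, hξ, hqξ⟩ := exists_eq_setAverage hconn hcont hq (by simp [hvol])
    (by simp [hvol, hm])
  have hmass : ∫ x in A, q x ∂μ = m * q ξ := by
    rw [hqξ, setAverage_eq, measureReal_def, hvol, ENNReal.toReal_ofReal hm.le, smul_eq_mul,
      mul_inv_cancel_left₀ hm.ne']
  rw [hmass, log_mul hm.ne' (hpos ξ hξ).ne', add_sub_cancel_left, ← hmass]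
  exact abs_setIntegral_mul_sub_le hA hq hqlog (fun x hx ↦ (hpos x hx).le) (hosc · · ξ hξ)

theorem abs_neg_sum_mul_log_add_log_add_setIntegral_le {ι : Type*} [Fintype ι]
    {A : ι → Set α} (hA : ∀ i, MeasurableSet (A i)) (hdisj : Pairwise (Disjoint on A))
    (hconn : ∀ i, IsConnected (A i)) (hm : 0 < m) (hvol : ∀ i, μ (A i) = ENNReal.ofReal m)
    (hcont : ∀ i, ContinuousOn q (A i)) (hpos : ∀ i, ∀ x ∈ A i, 0 < q x)
    (hq : ∀ i, IntegrableOn q (A i) μ)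
    (hqlog : ∀ i, IntegrableOn (fun x ↦ q x * log (q x)) (A i) μ)
    (hmass : ∫ x in ⋃ i, A i, q x ∂μ = 1)
    (hosc : ∀ i, ∀ x ∈ A i, ∀ y ∈ A i, |log (q x) - log (q y)| ≤ δ) :
    |(-∑ i, (∫ x in A i, q x ∂μ) * log (∫ x in A i, q x ∂μ)) + log m
        + ∫ x in ⋃ i, A i, q x * log (q x) ∂μ| ≤ δ := by
  rw [integral_iUnion_fintype hA hdisj hq] at hmass
  have hcell i := abs_setIntegral_mul_log_sub_le (hA i) (hconn i) hm (hvol i) (hcont i)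
    (hpos i) (hq i) (hqlog i) (hosc i)
  calc _ = |∑ i, (∫ x in A i, q x * log (q x) ∂μ
        - (∫ x in A i, q x ∂μ) * (log (∫ x in A i, q x ∂μ) - log m))| := by
        rw [integral_iUnion_fintype hA hdisj hqlog]
        simp only [mul_sub, Finset.sum_sub_distrib, ← Finset.sum_mul, hmass]
        ring_nf
    _ ≤ ∑ i, δ * ∫ x in A i, q x ∂μ := (Finset.abs_sum_le_sum_abs _ _).trans
        (Finset.sum_le_sum fun i _ ↦ hcell i)
    _ = δ := by rw [← Finset.mul_sum, hmass, mul_one]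

end Quantization

lemma isCompact_setOf_forall_mem_Icc {ι : Type*} (a b : ℝ) :
    IsCompact {x : ι → ℝ | ∀ j, x j ∈ Icc a b} := by
  simpa [Set.pi] using isCompact_univ_pi fun _ : ι ↦ isCompact_Icc (a := a) (b := b)

theorem stmt10_general (d n : ℕ) (s : ℝ) (hs : 0 < s)
    (Q : Set (Fin d → ℝ)) (hQ : Q = {x | ∀ j, x j ∈ Set.Ico (0 : ℝ) (n * s)})
    (Qc : Set (Fin d → ℝ)) (hQc : Qc = {x | ∀ j, x j ∈ Set.Icc (0 : ℝ) (n * s)})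
    (A : (Fin d → Fin n) → Set (Fin d → ℝ))
    (hA : ∀ v, A v = {x | ∀ j, x j ∈ Set.Ico ((v j : ℝ) * s) (((v j : ℝ) + 1) * s)})
    (q : (Fin d → ℝ) → ℝ) (hq_cont : ContinuousOn q Qc) (hq_pos : ∀ x ∈ Qc, 0 < q x)
    (hq_int : ∫ x in Q, q x = 1)
    (p : (Fin d → Fin n) → ℝ) (hp : ∀ v, p v = ∫ x in A v, q x)
    (δ : ℝ)
    (hδ : δ = sSup {t : ℝ | ∃ x ∈ Qc, ∃ y ∈ Qc,
        ‖x - y‖ ≤ s ∧ t = |Real.log (q x) - Real.log (q y)|}) :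
    |(-∑ v, p v * Real.log (p v)) + (d : ℝ) * Real.log s
        + ∫ x in Q, q x * Real.log (q x)| ≤ δ := by
  obtain rfl : A = gridCube s := funext hA
  obtain rfl : p = fun v ↦ ∫ x in gridCube s v, q x := funext hp
  obtain rfl : Q = ⋃ v, gridCube s v := hQ.trans (iUnion_gridCube s).symm
  have hQc_compact : IsCompact Qc := hQc ▸ isCompact_setOf_forall_mem_Icc _ _
  have hcube_sub v : gridCube s v ⊆ Qc := hQc ▸ gridCube_subset_setOf_forall_mem_Icc hs.le v
  have hlogq : ContinuousOn (fun x ↦ log (q x)) Qc :=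
    hq_cont.log fun x hx ↦ (hq_pos x hx).ne'
  have hint {f : (Fin d → ℝ) → ℝ} (hf : ContinuousOn f Qc) v : IntegrableOn f (gridCube s v) :=
    (hf.integrableOn_compact hQc_compact).mono_set (hcube_sub v)
  have key := abs_neg_sum_mul_log_add_log_add_setIntegral_le (m := s ^ d)
    (measurableSet_gridCube s) (pairwise_disjoint_gridCube hs.le) (isConnected_gridCube hs)
    (by positivity) (fun v ↦ by simp [volume_gridCube, ENNReal.ofReal_pow hs.le])
    (fun v ↦ hq_cont.mono (hcube_sub v)) (fun v x hx ↦ hq_pos x (hcube_sub v hx))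
    (hint hq_cont) (hint (hq_cont.mul hlogq)) hq_int fun v x hx y hy ↦ hδ ▸
      abs_sub_le_sSup_of_norm_sub_le hQc_compact hlogq (hcube_sub v hx) (hcube_sub v hy)
        (norm_sub_le_of_mem_gridCube hs.le hx hy)
  rwa [log_pow] at key

/-- The key analytic lemma of Theorem 7 of the paper (Appendix H): quantizing a
continuous, strictly positive density `q` on the cube `Q = [0, ns)^d` by the `n^d`
half-open subcubes of side length `s` changes the entropy by `d ln s` up to the
oscillation `δ` of `ln q` at scale `s` (in the sup norm):
`|(-Σ_v p_v ln p_v) + d ln s + ∫_Q q ln q dλ| ≤ δ`. -/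
theorem stmt10 (d n : ℕ) (hd : 1 ≤ d) (hn : 1 ≤ n) (s : ℝ) (hs : 0 < s)
    (Q : Set (Fin d → ℝ)) (hQ : Q = {x | ∀ j, x j ∈ Set.Ico (0 : ℝ) (n * s)})
    (Qc : Set (Fin d → ℝ)) (hQc : Qc = {x | ∀ j, x j ∈ Set.Icc (0 : ℝ) (n * s)})
    (A : (Fin d → Fin n) → Set (Fin d → ℝ))
    (hA : ∀ v, A v = {x | ∀ j, x j ∈ Set.Ico ((v j : ℝ) * s) (((v j : ℝ) + 1) * s)})
    (q : (Fin d → ℝ) → ℝ) (hq_cont : ContinuousOn q Qc) (hq_pos : ∀ x ∈ Qc, 0 < q x)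
    (hq_int : ∫ x in Q, q x = 1)
    (p : (Fin d → Fin n) → ℝ) (hp : ∀ v, p v = ∫ x in A v, q x)
    (δ : ℝ)
    (hδ : δ = sSup {t : ℝ | ∃ x ∈ Qc, ∃ y ∈ Qc,
        ‖x - y‖ ≤ s ∧ t = |Real.log (q x) - Real.log (q y)|}) :
    |(-∑ v, p v * Real.log (p v)) + (d : ℝ) * Real.log s
        + ∫ x in Q, q x * Real.log (q x)| ≤ δ :=
  stmt10_general d n s hs Q hQ Qc hQc A hA q hq_cont hq_pos hq_int p hp δ hδ
end
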